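/- arXiv:2405.15248 — 2 statements merged into one kernel-verified Lean document; each statement's English description precedes it below -/
import Mathlib

section
/- (Fact 4 of the paper: reasoning by cases is unsound for conditional strong historical necessity.) There exist a formula α ∈ Φ_XY, formulas φ, ψ ∈ Φ_ConSHN-BT, a model M, a context C for M, an instant i and a timeline π ∈ AT(C) such that both [α]φ and [¬α]ψ hold at (M, C, π, i) but □φ ∨ □ψ does not hold at (M, C, π, i); concretely this is witnessed by α = p, φ = p, ψ = ¬p, the empty context, and a model with exactly two timelines π₁, π₂ where V(p) = {π₁[1]}, evaluated at (π₁, 1). -/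
/-! The rule `⟨⟨α⟩⟩_i` added to the context by `[α]` keeps only timelines satisfying `α` at `i`,
so `[α]α` is valid for every `α ∈ Φ_XY`; in particular `[p]p` and `[¬p]¬p` always hold. The
box `□ = [⊤]` adds no constraint, so `□p ∨ □¬p` fails as soon as two timelines disagree on `p`
at the current instant. Such a model is `ℤ`, viewed as a tree rooted at `0` (the parent of
`w ≠ 0` is `w - sign w`), whose two timelines `i ↦ i` and `i ↦ -i` part at instant `1`; let
`p` hold only at `1`. -/

namespace ConSHN

/-- Formulas of the language Φ_XY, over atomic propositions indexed by ℕ. -/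
inductive FXY : Type
  | atom : ℕ → FXY
  | bot  : FXY
  | neg  : FXY → FXY
  | conj : FXY → FXY → FXY
  | X    : FXY → FXY
  | Y    : FXY → FXY
  deriving DecidableEq

/-- Formulas of the language Φ_ConSHN-BT. -/
inductive F : Type
  | atom : ℕ → F
  | bot  : F
  | neg  : F → F
  | conj : F → F → F
  | X    : F → F
  | Y    : F → F
  | con  : FXY → F → F
  deriving DecidableEq

namespace FXY

def top : FXY := neg bot
def imp (a b : FXY) : FXY := neg (conj a (neg b))
def or (a b : FXY) : FXY := neg (conj (neg a) (neg b))
def iff (a b : FXY) : FXY := conj (imp a b) (imp b a)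

/-- n-fold application of X. -/
def Xn : ℕ → FXY → FXY
  | 0, a => a
  | n+1, a => X (Xn n a)

/-- n-fold application of Y. -/
def Yn : ℕ → FXY → FXY
  | 0, a => a
  | n+1, a => Y (Yn n a)

/-- The embedding of Φ_XY into Φ_ConSHN-BT. -/
def toF : FXY → F
  | atom p => .atom p
  | bot => .bot
  | neg a => .neg (toF a)
  | conj a b => .conj (toF a) (toF b)
  | X a => .X (toF a)
  | Y a => .Y (toF a)

/-- Purely propositional formulas (no occurrence of X or Y). -/
inductive IsPL : FXY → Prop
  | atom (p : ℕ) : IsPL (atom p)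
  | bot : IsPL bot
  | neg {a} : IsPL a → IsPL (neg a)
  | conj {a b} : IsPL a → IsPL b → IsPL (conj a b)

/-- The language Φ_N-XY : β ::= Xⁿp | Xⁿ⊥ | Yⁿp | Yⁿ⊥ | ¬β | (β ∧ β). -/
inductive NXY : FXY → Prop
  | xatom (n p : ℕ) : NXY (Xn n (atom p))
  | xbot (n : ℕ) : NXY (Xn n bot)
  | yatom (n p : ℕ) : NXY (Yn n (atom p))
  | ybot (n : ℕ) : NXY (Yn n bot)
  | neg {a} : NXY a → NXY (neg a)
  | conj {a b} : NXY a → NXY b → NXY (conj a b)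

end FXY

namespace F

def top : F := neg bot
def imp (a b : F) : F := neg (conj a (neg b))
def or (a b : F) : F := neg (conj (neg a) (neg b))
def iff (a b : F) : F := conj (imp a b) (imp b a)

/-- ⟨α⟩φ := ¬[α]¬φ -/
def dcon (α : FXY) (φ : F) : F := neg (con α (neg φ))

/-- □φ := [⊤]φ -/
def box (φ : F) : F := con FXY.top φ

/-- ◇φ := ¬□¬φ -/
def dia (φ : F) : F := neg (box (neg φ))

/-- Closed formulas of Φ_ConSHN-BT : χ ::= [α]φ | ¬χ | (χ ∧ χ). -/
inductive Closed : F → Prop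
  | con (α : FXY) (φ : F) : Closed (con α φ)
  | neg {χ} : Closed χ → Closed (neg χ)
  | conj {χ₁ χ₂} : Closed χ₁ → Closed χ₂ → Closed (conj χ₁ χ₂)

/-- The language Φ_Con-XY : φ ::= Xⁿp | Xⁿ⊥ | Yⁿp | Yⁿ⊥ | ¬φ | (φ ∧ φ) | [β]φ, β ∈ Φ_N-XY. -/
inductive ConXY : F → Prop
  | xatom (n p : ℕ) : ConXY (FXY.Xn n (.atom p)).toF
  | xbot (n : ℕ) : ConXY (FXY.Xn n .bot).toF
  | yatom (n p : ℕ) : ConXY (FXY.Yn n (.atom p)).toF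
  | ybot (n : ℕ) : ConXY (FXY.Yn n .bot).toF
  | neg {φ} : ConXY φ → ConXY (neg φ)
  | conj {φ ψ} : ConXY φ → ConXY ψ → ConXY (conj φ ψ)
  | con {β : FXY} {φ} : β.NXY → ConXY φ → ConXY (con β φ)

/-- The language Φ_One□-XY : φ ::= β | ¬φ | (φ ∧ φ) | □β, β ∈ Φ_N-XY. -/
inductive OneBox : F → Prop
  | base {β : FXY} : β.NXY → OneBox β.toF
  | neg {φ} : OneBox φ → OneBox (neg φ)
  | conj {φ ψ} : OneBox φ → OneBox ψ → OneBox (conj φ ψ)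
  | box {β : FXY} : β.NXY → OneBox (box β.toF)

end F

/-- A branching-time model. -/
structure Model where
  W : Type
  lt : W → W → Prop
  V : ℕ → Set W
  nonempty : Nonempty W
  serial : ∀ w, ∃ v, lt w v
  root : W
  reach : ∀ w : W, ∃! l : List W,
    List.Chain' lt l ∧ l.head? = some root ∧ l.getLast? = some w

/-- The set TL(M) of timelines of the model M. -/
def Timeline (M : Model) : Set (ℕ → M.W) :=
  {π | π 0 = M.root ∧ ∀ i, M.lt (π i) (π (i + 1))}

/-- AT(C): the acceptable timelines by a context C (AT(∅) = TL(M)). -/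
def AT (M : Model) (C : Set (Set (ℕ → M.W))) : Set (ℕ → M.W) :=
  Timeline M ∩ ⋂₀ C

/-- Truth of Φ_XY formulas at (M, π, i) (independent of contexts). -/
def satXY (M : Model) (π : ℕ → M.W) : ℕ → FXY → Prop
  | i, .atom p => π i ∈ M.V p
  | _, .bot => False
  | i, .neg a => ¬ satXY M π i a
  | i, .conj a b => satXY M π i a ∧ satXY M π i b
  | i, .X a => satXY M π (i + 1) a
  | i, .Y a => 0 < i ∧ satXY M π (i - 1) a

/-- The indefeasible ontic rule ⟨⟨α⟩⟩_i generated by α at instant i. -/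
def ruleOf (M : Model) (α : FXY) (i : ℕ) : Set (ℕ → M.W) :=
  {π | π ∈ Timeline M ∧ satXY M π i α}

/-- The update C + α@i of a context C with α at instant i. -/
def upd (M : Model) (C : Set (Set (ℕ → M.W))) (α : FXY) (i : ℕ) :
    Set (Set (ℕ → M.W)) :=
  insert (ruleOf M α i) C

/-- Truth of Φ_ConSHN-BT formulas at (M, C, π, i). -/
def sat (M : Model) : Set (Set (ℕ → M.W)) → (ℕ → M.W) → ℕ → F → Prop
  | _, π, i, .atom p => π i ∈ M.V p
  | _, _, _, .bot => False
  | C, π, i, .neg φ => ¬ sat M C π i φ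
  | C, π, i, .conj φ ψ => sat M C π i φ ∧ sat M C π i ψ
  | C, π, i, .X φ => sat M C π (i + 1) φ
  | C, π, i, .Y φ => 0 < i ∧ sat M C π (i - 1) φ
  | C, π, i, .con α φ =>
      ∀ π' ∈ AT M (upd M C α i), sat M (upd M C α i) π' i φ

/-- C is a context for M: a finite set of sets of timelines. -/
def IsContext (M : Model) (C : Set (Set (ℕ → M.W))) : Prop :=
  C.Finite ∧ ∀ R ∈ C, R ⊆ Timeline M

/-- Validity: truth at every contextualized pointed model. -/
def Valid (φ : F) : Prop :=
  ∀ (M : Model) (C : Set (Set (ℕ → M.W))) (π : ℕ → M.W) (i : ℕ),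
    IsContext M C → π ∈ AT M C → sat M C π i φ

/-- Satisfiability: truth at some contextualized pointed model. -/
def Satisfiable (φ : F) : Prop :=
  ∃ (M : Model) (C : Set (Set (ℕ → M.W))) (π : ℕ → M.W) (i : ℕ),
    IsContext M C ∧ π ∈ AT M C ∧ sat M C π i φ

/-- Propositional evaluation: ⊥, ¬, ∧ are interpreted, all other formulas
are treated as propositional atoms evaluated by v. -/
def evalProp (v : F → Prop) : F → Prop
  | .bot => False
  | .neg φ => ¬ evalProp v φ
  | .conj φ ψ => evalProp v φ ∧ evalProp v ψ
  | φ => v φ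

/-- φ is a propositional tautology. -/
def Taut (φ : F) : Prop := ∀ v : F → Prop, evalProp v φ

section Trees

variable {W : Type*}

def IsChainFromTo (R : W → W → Prop) (a b : W) (l : List W) : Prop :=
  l.IsChain R ∧ l.head? = some a ∧ l.getLast? = some b

def ParentRel (parent : W → W) (root : W) (v w : W) : Prop :=
  w ≠ root ∧ parent w = v

variable {parent : W → W} {root : W}

theorem isChainFromTo_parentRel_iff {l : List W} {w : W} :
    IsChainFromTo (ParentRel parent root) root w l ↔
      (w = root ∧ l = [root]) ∨
        (w ≠ root ∧ ∃ l', IsChainFromTo (ParentRel parent root) root (parent w) l' ∧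
          l = l' ++ [w]) := by
  constructor
  · rintro ⟨hc, hh, hl⟩
    obtain ⟨ys, rfl⟩ := List.getLast?_eq_some_iff.mp hl
    rcases List.eq_nil_or_concat ys with rfl | ⟨L, b, rfl⟩
    · have hw : w = root := by simpa using hh
      exact Or.inl ⟨hw, by rw [hw, List.nil_append]⟩
    · obtain ⟨hcL, -, hbw⟩ := List.isChain_append.mp hc
      obtain ⟨hw, rfl⟩ : ParentRel parent root b w := hbw b (by simp) w rfl
      refine Or.inr ⟨hw, L.concat (parent w), ⟨hcL, ?_, by simp⟩, rfl⟩
      simpa [List.head?_append] using hh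
  · rintro (⟨rfl, rfl⟩ | ⟨hw, l', ⟨hc, hh, hl⟩, rfl⟩)
    · exact ⟨List.isChain_singleton _, rfl, rfl⟩
    · refine ⟨hc.append (List.isChain_singleton w) ?_, ?_, by simp⟩
      · simp only [hl, Option.mem_def, Option.some.injEq, List.head?_cons]
        rintro _ rfl _ rfl
        exact ⟨hw, rfl⟩
      · simp [List.head?_append, hh]

theorem existsUnique_isChainFromTo_parentRel (depth : W → ℕ)
    (hdepth : ∀ w ≠ root, depth (parent w) < depth w) (w : W) :
    ∃! l, IsChainFromTo (ParentRel parent root) root w l := by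
  induction hn : depth w using Nat.strong_induction_on generalizing w with
  | _ n ih =>
    by_cases hw : w = root
    · subst w
      refine ⟨[root], isChainFromTo_parentRel_iff.mpr (Or.inl ⟨rfl, rfl⟩), fun l hl => ?_⟩
      rcases isChainFromTo_parentRel_iff.mp hl with ⟨-, rfl⟩ | ⟨hne, -⟩
      exacts [rfl, absurd rfl hne]
    · obtain ⟨l', hl', huniq⟩ := ih _ (hn ▸ hdepth w hw) (parent w) rfl
      refine ⟨l' ++ [w], isChainFromTo_parentRel_iff.mpr (Or.inr ⟨hw, l', hl', rfl⟩),
        fun l hl => ?_⟩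
      rcases isChainFromTo_parentRel_iff.mp hl with ⟨h, -⟩ | ⟨-, l'', hl'', rfl⟩
      exacts [absurd h hw, by rw [huniq l'' hl'']]

end Trees

def stepTowardZero (w : ℤ) : ℤ := w - w.sign

theorem natAbs_stepTowardZero_lt {w : ℤ} (hw : w ≠ 0) :
    (stepTowardZero w).natAbs < w.natAbs := by
  rcases hw.lt_or_gt with h | h
  · rw [stepTowardZero, Int.sign_eq_neg_one_of_neg h]; omega
  · rw [stepTowardZero, Int.sign_eq_one_of_pos h]; omega

theorem parentRel_stepTowardZero_add_one {n : ℤ} (hn : 0 ≤ n) :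
    ParentRel stepTowardZero 0 n (n + 1) := by
  refine ⟨by omega, ?_⟩
  rw [stepTowardZero, Int.sign_eq_one_of_pos (by omega), add_sub_cancel_right]

theorem parentRel_stepTowardZero_sub_one {n : ℤ} (hn : n ≤ 0) :
    ParentRel stepTowardZero 0 n (n - 1) := by
  refine ⟨by omega, ?_⟩
  rw [stepTowardZero, Int.sign_eq_neg_one_of_neg (by omega), sub_neg_eq_add, sub_add_cancel]

def twoBranches : Model where
  W := ℤ
  lt := ParentRel stepTowardZero 0
  V _ := {1}
  nonempty := ⟨0⟩
  serial v := by
    rcases le_total 0 v with h | h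
    exacts [⟨_, parentRel_stepTowardZero_add_one h⟩, ⟨_, parentRel_stepTowardZero_sub_one h⟩]
  root := 0
  reach := existsUnique_isChainFromTo_parentRel Int.natAbs fun _ => natAbs_stepTowardZero_lt

def ascending : ℕ → twoBranches.W := fun i => (i : ℤ)

def descending : ℕ → twoBranches.W := fun i => -(i : ℤ)

theorem ascending_mem_timeline : ascending ∈ Timeline twoBranches := by
  refine ⟨rfl, fun i => ?_⟩
  show ParentRel stepTowardZero 0 (i : ℤ) ((i + 1 : ℕ) : ℤ)
  rw [Nat.cast_succ]
  exact parentRel_stepTowardZero_add_one (Int.natCast_nonneg i)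

theorem descending_mem_timeline : descending ∈ Timeline twoBranches := by
  refine ⟨by simp [descending, twoBranches], fun i => ?_⟩
  show ParentRel stepTowardZero 0 (-(i : ℤ)) (-((i + 1 : ℕ) : ℤ))
  rw [Nat.cast_succ, neg_add']
  exact parentRel_stepTowardZero_sub_one (neg_nonpos.mpr (Int.natCast_nonneg i))

section Semantics

variable (M : Model) (C : Set (Set (ℕ → M.W))) (π : ℕ → M.W) (i : ℕ)

theorem isContext_empty : IsContext M ∅ :=
  ⟨Set.finite_empty, by simp⟩

theorem AT_empty : AT M ∅ = Timeline M := by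
  simp [AT]

theorem AT_upd_top : AT M (upd M C FXY.top i) = AT M C := by
  have : ruleOf M FXY.top i = Timeline M := by
    ext π; simp [ruleOf, FXY.top, satXY]
  simp [AT, upd, this, ← Set.inter_assoc]

theorem sat_toF_iff (α : FXY) : sat M C π i α.toF ↔ satXY M π i α := by
  induction α generalizing i <;> simp [FXY.toF, sat, satXY, *]

theorem sat_con_toF (α : FXY) : sat M C π i (F.con α α.toF) := fun π' hπ' =>
  (sat_toF_iff M _ π' i α).mpr (hπ'.2 _ (Set.mem_insert _ _)).2

theorem sat_box_toF_iff (α : FXY) :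
    sat M C π i (F.box α.toF) ↔ ∀ π' ∈ AT M C, satXY M π' i α := by
  simp only [F.box, sat, AT_upd_top, sat_toF_iff]

theorem sat_or_iff (φ ψ : F) : sat M C π i (F.or φ ψ) ↔ sat M C π i φ ∨ sat M C π i ψ := by
  simp only [F.or, sat]
  tauto

end Semantics

end ConSHN

open ConSHN

/-- Fact 4: reasoning by cases is unsound for conditional strong historical
necessity: there are α, φ, ψ and a contextualized pointed model at which
[α]φ and [¬α]ψ hold but □φ ∨ □ψ fails. -/
theorem fact_reasoning_by_cases_unsound :
    ∃ (α : FXY) (φ ψ : F) (M : Model) (C : Set (Set (ℕ → M.W)))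
      (π : ℕ → M.W) (i : ℕ),
      IsContext M C ∧ π ∈ AT M C ∧
      sat M C π i (F.con α φ) ∧
      sat M C π i (F.con (.neg α) ψ) ∧
      ¬ sat M C π i (F.or (F.box φ) (F.box ψ)) := by
  refine ⟨.atom 0, (FXY.atom 0).toF, (FXY.neg (.atom 0)).toF, twoBranches, ∅, ascending, 1,
    isContext_empty _, (AT_empty _).symm ▸ ascending_mem_timeline,
    sat_con_toF _ _ _ _ _, sat_con_toF _ _ _ _ _, ?_⟩
  rw [sat_or_iff, sat_box_toF_iff, sat_box_toF_iff, AT_empty]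
  push Not
  exact ⟨⟨descending, descending_mem_timeline, show (-1 : ℤ) ∉ ({1} : Set ℤ) by simp⟩,
    ⟨ascending, ascending_mem_timeline, show ¬(1 : ℤ) ∉ ({1} : Set ℤ) by simp⟩⟩
end

section
/- (Fact on reduction 2, semantics.) There is a computable function μ from Φ_Con-XY to Φ_One□-XY such that for every φ ∈ Φ_Con-XY, the formula φ ↔ μ(φ) is valid. -/
open ConSHN

/-!
The translation μ works bottom-up, so it suffices to eliminate `[β]ψ` for `ψ` already in
Φ_One□-XY. Inside `[β]` the context is `C + β@i`, where every box `□γ` of `ψ` has one truth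
value for all acceptable timelines, namely that of `□(β → γ)` at `C`. Splitting on the set `S` of
boxes of `ψ` that are true, `[β]ψ` becomes the conjunction over all `S` of
"if exactly the `□(β → γ)` with `γ ∈ S` hold, then `□(β → ψ_S)`", where `ψ_S` is `ψ` with its
boxes replaced by `⊤` or `⊥` according to `S`.
-/

namespace ConSHN

/-- Left inverse of `FXY.toF`; its value on `con` is irrelevant. -/
def unF : F → FXY
  | .atom p => .atom p
  | .bot => .bot
  | .neg φ => .neg (unF φ)
  | .conj φ ψ => .conj (unF φ) (unF ψ)
  | .X φ => .X (unF φ)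
  | .Y φ => .Y (unF φ)
  | .con _ _ => FXY.top

def boxBodies : F → List FXY
  | .neg φ => boxBodies φ
  | .conj φ ψ => boxBodies φ ++ boxBodies ψ
  | .con _ φ => [unF φ]
  | _ => []

def fillBoxes (S : List FXY) : F → FXY
  | .atom p => .atom p
  | .bot => .bot
  | .neg φ => .neg (fillBoxes S φ)
  | .conj φ ψ => .conj (fillBoxes S φ) (fillBoxes S ψ)
  | .X φ => .X (fillBoxes S φ)
  | .Y φ => .Y (fillBoxes S φ)
  | .con _ φ => if unF φ ∈ S then FXY.top else FXY.bot

def bigConj : List F → F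
  | [] => F.top
  | φ :: l => .conj φ (bigConj l)

def boxGuard (β : FXY) (L S : List FXY) : F :=
  bigConj (L.map fun γ =>
    if γ ∈ S then F.box (β.imp γ).toF else .neg (F.box (β.imp γ).toF))

def elimCon (β : FXY) (ψ : F) : F :=
  bigConj ((boxBodies ψ).sublists.map fun S =>
    F.imp (boxGuard β (boxBodies ψ) S) (F.box (β.imp (fillBoxes S ψ)).toF))

def toOneBox : F → F
  | .neg φ => .neg (toOneBox φ)
  | .conj φ ψ => .conj (toOneBox φ) (toOneBox ψ)
  | .con β φ => elimCon β (toOneBox φ)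
  | φ => φ

@[simp] lemma unF_toF (γ : FXY) : unF γ.toF = γ := by
  induction γ <;> simp [FXY.toF, unF, *]

@[simp] lemma boxBodies_toF (γ : FXY) : boxBodies γ.toF = [] := by
  induction γ <;> simp [FXY.toF, boxBodies, *]

@[simp] lemma fillBoxes_toF (S : List FXY) (γ : FXY) : fillBoxes S γ.toF = γ := by
  induction γ <;> simp [FXY.toF, fillBoxes, *]

@[simp] lemma toOneBox_toF (γ : FXY) : toOneBox γ.toF = γ.toF := by
  induction γ <;> simp [FXY.toF, toOneBox, *]

@[simp] lemma boxBodies_box (γ : FXY) : boxBodies (F.box γ.toF) = [γ] := by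
  simp [F.box, boxBodies]

@[simp] lemma fillBoxes_box (S : List FXY) (γ : FXY) :
    fillBoxes S (F.box γ.toF) = if γ ∈ S then FXY.top else FXY.bot := by
  simp [F.box, fillBoxes]

namespace FXY.NXY

lemma top : FXY.top.NXY := .neg (.xbot 0)

lemma imp {a b : FXY} (ha : a.NXY) (hb : b.NXY) : (a.imp b).NXY :=
  .neg (.conj ha (.neg hb))

lemma fillBoxes {ψ : F} (h : ψ.OneBox) (S : List FXY) : (fillBoxes S ψ).NXY := by
  induction h with
  | base hβ => rwa [fillBoxes_toF]
  | neg _ ih => exact .neg ih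
  | conj _ _ ih₁ ih₂ => exact .conj ih₁ ih₂
  | box =>
    rw [fillBoxes_box]
    split
    · exact top
    · exact .xbot 0

lemma of_mem_boxBodies {ψ : F} (h : ψ.OneBox) : ∀ γ ∈ boxBodies ψ, γ.NXY := by
  induction h with
  | base => simp
  | neg _ ih => exact ih
  | conj _ _ ih₁ ih₂ =>
    simp only [boxBodies, List.mem_append]
    rintro γ (hγ | hγ)
    exacts [ih₁ γ hγ, ih₂ γ hγ]
  | box hγ => simpa using hγ

end FXY.NXY

namespace F.OneBox

lemma top : F.top.OneBox := .neg (.base (.xbot 0))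

lemma imp {a b : F} (ha : a.OneBox) (hb : b.OneBox) : (a.imp b).OneBox :=
  .neg (.conj ha (.neg hb))

lemma bigConj {L : List F} (h : ∀ φ ∈ L, φ.OneBox) : (bigConj L).OneBox := by
  induction L with
  | nil => exact top
  | cons φ l ih => exact .conj (h φ (by simp)) (ih fun ψ hψ => h ψ (by simp [hψ]))

lemma elimCon {β : FXY} {ψ : F} (hβ : β.NXY) (hψ : ψ.OneBox) : (elimCon β ψ).OneBox := by
  refine bigConj fun φ hφ => ?_
  obtain ⟨S, -, rfl⟩ := List.mem_map.mp hφ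
  refine imp (bigConj fun χ hχ => ?_) (.box (hβ.imp (.fillBoxes hψ S)))
  obtain ⟨γ, hγ, rfl⟩ := List.mem_map.mp hχ
  have hβγ := hβ.imp (FXY.NXY.of_mem_boxBodies hψ γ hγ)
  split
  · exact .box hβγ
  · exact .neg (.box hβγ)

end F.OneBox

lemma F.ConXY.oneBox_toOneBox {φ : F} (h : φ.ConXY) : (toOneBox φ).OneBox := by
  induction h with
  | xatom n p => rw [toOneBox_toF]; exact .base (.xatom n p)
  | xbot n => rw [toOneBox_toF]; exact .base (.xbot n)
  | yatom n p => rw [toOneBox_toF]; exact .base (.yatom n p)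
  | ybot n => rw [toOneBox_toF]; exact .base (.ybot n)
  | neg _ ih => exact .neg ih
  | conj _ _ ih₁ ih₂ => exact .conj ih₁ ih₂
  | con hβ _ ih => exact .elimCon hβ ih

section

variable {M : Model} {C : Set (Set (ℕ → M.W))} {π : ℕ → M.W} {i : ℕ}

lemma sat_toF (γ : FXY) : sat M C π i γ.toF ↔ satXY M π i γ := by
  induction γ generalizing i <;> simp [FXY.toF, sat, satXY, *]

lemma satXY_imp {a b : FXY} : satXY M π i (a.imp b) ↔ (satXY M π i a → satXY M π i b) := by
  simp [FXY.imp, satXY]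

lemma sat_imp {a b : F} : sat M C π i (a.imp b) ↔ (sat M C π i a → sat M C π i b) := by
  simp [F.imp, sat]

lemma sat_iff {a b : F} : sat M C π i (a.iff b) ↔ (sat M C π i a ↔ sat M C π i b) := by
  simp only [F.iff, sat, F.imp]
  tauto

lemma sat_bigConj {L : List F} : sat M C π i (bigConj L) ↔ ∀ φ ∈ L, sat M C π i φ := by
  induction L with
  | nil => simp [bigConj, F.top, sat]
  | cons φ l ih => simp [bigConj, sat, ih]

lemma forall_mem_AT_upd {α : FXY} {P : (ℕ → M.W) → Prop} :
    (∀ π' ∈ AT M (upd M C α i), P π') ↔ ∀ π' ∈ AT M C, satXY M π' i α → P π' := by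
  simp only [AT, upd, ruleOf, Set.sInter_insert, Set.mem_inter_iff, Set.mem_ofPred_eq]
  grind

lemma sat_con {α : FXY} {φ : F} :
    sat M C π i (.con α φ) ↔ ∀ π' ∈ AT M (upd M C α i), sat M (upd M C α i) π' i φ := by
  rw [sat]

lemma sat_box (γ : FXY) : sat M C π i (F.box γ.toF) ↔ ∀ π' ∈ AT M C, satXY M π' i γ := by
  simp [F.box, sat_con, forall_mem_AT_upd, sat_toF, FXY.top, satXY]

lemma sat_box_imp (β γ : FXY) :
    sat M C π i (F.box (β.imp γ).toF) ↔ ∀ π' ∈ AT M (upd M C β i), satXY M π' i γ := by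
  simp [sat_box, satXY_imp, forall_mem_AT_upd]

variable (M C i) in
def SelectsTrueBoxes (L S : List FXY) : Prop :=
  ∀ γ ∈ L, (γ ∈ S ↔ ∀ π' ∈ AT M C, satXY M π' i γ)

lemma sat_boxGuard {β : FXY} {L S : List FXY} :
    sat M C π i (boxGuard β L S) ↔ SelectsTrueBoxes M (upd M C β i) i L S := by
  simp only [boxGuard, sat_bigConj, List.forall_mem_map, SelectsTrueBoxes]
  refine forall₂_congr fun γ _ => ?_
  split_ifs with hγ
  · simp [hγ, sat_box_imp]
  · simp [hγ, sat, sat_box_imp]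

lemma sat_iff_satXY_fillBoxes {ψ : F} (hψ : ψ.OneBox) {S : List FXY}
    (hS : SelectsTrueBoxes M C i (boxBodies ψ) S) :
    sat M C π i ψ ↔ satXY M π i (fillBoxes S ψ) := by
  induction hψ with
  | base => rw [fillBoxes_toF, sat_toF]
  | neg _ ih => exact not_congr (ih hS)
  | conj _ _ ih₁ ih₂ =>
    exact and_congr (ih₁ fun γ hγ => hS γ (List.mem_append_left _ hγ))
      (ih₂ fun γ hγ => hS γ (List.mem_append_right _ hγ))
  | @box γ _ =>
    have hγ := hS γ (by simp)
    rw [sat_box, fillBoxes_box, ← hγ]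
    by_cases hγS : γ ∈ S <;> simp [hγS, FXY.top, satXY]

lemma sat_con_iff_sat_elimCon {β : FXY} {ψ : F} (hψ : ψ.OneBox) :
    sat M C π i (.con β ψ) ↔ sat M C π i (elimCon β ψ) := by
  classical
  simp only [elimCon, sat_bigConj, List.forall_mem_map, sat_imp, sat_boxGuard, sat_box_imp,
    sat_con]
  constructor
  · intro h S _ hS π' hπ'
    exact (sat_iff_satXY_fillBoxes hψ hS).mp (h π' hπ')
  · intro h π' hπ'
    set D := upd M C β i
    let S := (boxBodies ψ).filter fun γ => ∀ π'' ∈ AT M D, satXY M π'' i γ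
    have hS : SelectsTrueBoxes M D i (boxBodies ψ) S := fun γ hγ => by simp [S, hγ]
    exact (sat_iff_satXY_fillBoxes hψ hS).mpr
      (h S (List.mem_sublists.mpr List.filter_sublist) hS π' hπ')

lemma sat_toOneBox_iff {φ : F} (h : φ.ConXY) : sat M C π i (toOneBox φ) ↔ sat M C π i φ := by
  induction h generalizing C π with
  | neg _ ih => exact not_congr ih
  | conj _ _ ih₁ ih₂ => exact and_congr ih₁ ih₂
  | con _ hφ ih =>
    rw [toOneBox, ← sat_con_iff_sat_elimCon hφ.oneBox_toOneBox, sat_con, sat_con]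
    exact forall₂_congr fun _ _ => ih
  | _ => simp

end

end ConSHN

/-- Reduction 2 (semantics): there is a function μ from Φ_Con-XY to
Φ_One□-XY such that φ ↔ μ(φ) is valid for every φ ∈ Φ_Con-XY. -/
theorem reduction_to_OneBox :
    ∃ μ : F → F, ∀ φ : F, φ.ConXY → (μ φ).OneBox ∧ Valid (F.iff φ (μ φ)) :=
  ⟨toOneBox, fun _ h =>
    ⟨h.oneBox_toOneBox, fun _ _ _ _ _ _ => sat_iff.mpr (sat_toOneBox_iff h).symm⟩⟩
end
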